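/- arXiv:2302.05245 — 4 statements merged into one kernel-verified Lean document; each statement's English description precedes it below -/
import Mathlib

section
/- For any input sequence of insertions and any fixed choice of hash functions, the estimate returned by the basic Count-Min sketch for any element is greater than or equal to the estimate returned by the conservative Count-Min sketch on the same input. -/
variable {α : Type*} [DecidableEq α]

/-- Basic Count-Min update: increment `A[h i e]` for every `i` (with multiplicity). -/
def basicStep {n k : ℕ} (h : Fin (k + 1) → α → Fin n) (A : Fin n → ℕ) (e : α) :
    Fin n → ℕ :=
  fun j => A j + (Finset.univ.filter (fun i => h i e = j)).card

/-- The minimum counter value among the hash positions of `e`. -/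
def minCounter {n k : ℕ} (h : Fin (k + 1) → α → Fin n) (A : Fin n → ℕ) (e : α) : ℕ :=
  Finset.univ.inf' Finset.univ_nonempty (fun i => A (h i e))

/-- Conservative Count-Min update: increment only the minimal counters of `e`'s positions. -/
def consStep {n k : ℕ} (h : Fin (k + 1) → α → Fin n) (A : Fin n → ℕ) (e : α) :
    Fin n → ℕ :=
  fun j => if (∃ i, h i e = j) ∧ A j = minCounter h A e then A j + 1 else A j

/-- Counter array after processing input `I` with the basic update rule, from all-zero. -/
def basicRun {n k : ℕ} (h : Fin (k + 1) → α → Fin n) (I : List α) : Fin n → ℕ :=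
  I.foldl (basicStep h) (fun _ => 0)

/-- Counter array after processing input `I` with the conservative update rule. -/
def consRun {n k : ℕ} (h : Fin (k + 1) → α → Fin n) (I : List α) : Fin n → ℕ :=
  I.foldl (consStep h) (fun _ => 0)

/-- Estimate returned by basic Count-Min. -/
def basicEstimate {n k : ℕ} (h : Fin (k + 1) → α → Fin n) (I : List α) (e : α) : ℕ :=
  minCounter h (basicRun h I) e

/-- Estimate returned by conservative Count-Min. -/
def consEstimate {n k : ℕ} (h : Fin (k + 1) → α → Fin n) (I : List α) (e : α) : ℕ :=
  minCounter h (consRun h I) e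

/-- For any input sequence and any fixed hash functions, the basic Count-Min estimate of
any element is at least the conservative Count-Min estimate on the same input. -/
theorem basic_estimate_ge_conservative {α : Type*} [DecidableEq α] {n k : ℕ}
    (h : Fin (k + 1) → α → Fin n) (I : List α) (e : α) :
    consEstimate h I e ≤ basicEstimate h I e := by
  have step : ∀ (A B : Fin n → ℕ) (x : α), (∀ j, A j ≤ B j) →
      ∀ j, consStep h A x j ≤ basicStep h B x j := by
    intro A B x hAB j
    unfold consStep basicStep
    split
    · next hc =>
      obtain ⟨⟨i, hi⟩, _⟩ := hc
      have hcard : 1 ≤ (Finset.univ.filter (fun i => h i x = j)).card :=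
        Finset.card_pos.mpr ⟨i, by simp [hi]⟩
      have := hAB j
      omega
    · exact le_trans (hAB j) (Nat.le_add_right _ _)
  have run : ∀ (I : List α) (A B : Fin n → ℕ), (∀ j, A j ≤ B j) →
      ∀ j, I.foldl (consStep h) A j ≤ I.foldl (basicStep h) B j := by
    intro I
    induction I with
    | nil => intro A B hAB j; simpa using hAB j
    | cons x xs ih =>
      intro A B hAB j
      exact ih _ _ (step A B x hAB) j
  have hrun : ∀ j, consRun h I j ≤ basicRun h I j :=
    run I _ _ (fun _ => le_refl 0)
  unfold consEstimate basicEstimate minCounter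
  apply Finset.le_inf'
  intro i _
  exact le_trans (Finset.inf'_le _ (Finset.mem_univ i)) (hrun (h i e))
end

section
/- If in the hash hypergraph an element e has some hash position j = h_i(e) that is not shared with any other element appearing in the input, then the conservative Count-Min estimate of e is exact: c(e) = occ(e). -/
variable {α : Type*} [DecidableEq α]

/-! A private position `h i e` is touched only by insertions of `e`, and it remains a minimal
counter of `e` throughout: insertions of `e` raise every minimal counter of `e`, hence also the
minimum, by one, while other insertions leave it unchanged and never decrease a counter. So the
private counter equals the estimate at all times and ends at `occ(e)`. -/

section ConservativeUpdate

variable {β : Type*} {n k : ℕ} (h : Fin (k + 1) → β → Fin n)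

theorem minCounter_le (A : Fin n → ℕ) (e : β) (i : Fin (k + 1)) :
    minCounter h A e ≤ A (h i e) :=
  Finset.inf'_le _ (Finset.mem_univ i)

theorem minCounter_mono {A B : Fin n → ℕ} (hAB : A ≤ B) (e : β) :
    minCounter h A e ≤ minCounter h B e :=
  Finset.le_inf' _ _ fun i _ => (minCounter_le h A e i).trans (hAB _)

theorem le_consStep (A : Fin n → ℕ) (x : β) : A ≤ consStep h A x := fun j => by
  show A j ≤ consStep h A x j
  unfold consStep
  split_ifs <;> omega

theorem consStep_apply_of_forall_ne {A : Fin n → ℕ} {x : β} {j : Fin n}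
    (hx : ∀ i, h i x ≠ j) : consStep h A x j = A j :=
  if_neg fun ⟨⟨i, hi⟩, _⟩ => hx i hi

theorem consStep_apply_self_of_eq_minCounter {A : Fin n → ℕ} {e : β} {i : Fin (k + 1)}
    (hA : A (h i e) = minCounter h A e) : consStep h A e (h i e) = A (h i e) + 1 :=
  if_pos ⟨⟨i, rfl⟩, hA⟩

theorem minCounter_consStep_self (A : Fin n → ℕ) (e : β) :
    minCounter h (consStep h A e) e = minCounter h A e + 1 := by
  obtain ⟨i₀, -, hi₀ : minCounter h A e = A (h i₀ e)⟩ :=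
    Finset.exists_mem_eq_inf' Finset.univ_nonempty fun i => A (h i e)
  refine le_antisymm ?_ (Finset.le_inf' _ _ fun i _ => ?_)
  · calc minCounter h (consStep h A e) e ≤ consStep h A e (h i₀ e) := minCounter_le h _ e i₀
      _ = minCounter h A e + 1 := by rw [consStep_apply_self_of_eq_minCounter h hi₀.symm, hi₀]
  · -- a counter of `e` left unchanged was strictly above the minimum
    have hle := minCounter_le h A e i
    unfold consStep
    split_ifs with hmin
    · omega
    · have hne : A (h i e) ≠ minCounter h A e := fun heq => hmin ⟨⟨i, rfl⟩, heq⟩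
      omega

theorem consStep_apply_eq_minCounter_of_private {A : Fin n → ℕ} {x e : β} {i : Fin (k + 1)}
    (hA : A (h i e) = minCounter h A e) (hx : x ≠ e → ∀ i', h i' x ≠ h i e) :
    consStep h A x (h i e) = minCounter h (consStep h A x) e := by
  refine le_antisymm ?_ (minCounter_le h _ e i)
  by_cases hxe : x = e
  · subst hxe
    rw [consStep_apply_self_of_eq_minCounter h hA, minCounter_consStep_self, hA]
  · rw [consStep_apply_of_forall_ne h (hx hxe), hA]
    exact minCounter_mono h (le_consStep h A x) e

theorem foldl_consStep_apply_eq_minCounter_of_private {e : β} {i : Fin (k + 1)} :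
    ∀ {I : List β} {A : Fin n → ℕ}, (∀ x ∈ I, x ≠ e → ∀ i', h i' x ≠ h i e) →
      A (h i e) = minCounter h A e →
      I.foldl (consStep h) A (h i e) = minCounter h (I.foldl (consStep h) A) e
  | [], _, _, hA => hA
  | x :: I, _, hpriv, hA =>
    foldl_consStep_apply_eq_minCounter_of_private (I := I)
      (fun y hy => hpriv y (List.mem_cons_of_mem x hy))
      (consStep_apply_eq_minCounter_of_private h hA (hpriv x List.mem_cons_self))

theorem foldl_consStep_apply_of_private [DecidableEq β] {e : β} {i : Fin (k + 1)} :
    ∀ {I : List β} {A : Fin n → ℕ}, (∀ x ∈ I, x ≠ e → ∀ i', h i' x ≠ h i e) →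
      A (h i e) = minCounter h A e →
      I.foldl (consStep h) A (h i e) = A (h i e) + I.count e
  | [], _, _, _ => rfl
  | x :: I, A, hpriv, hA => by
    have hx := hpriv x List.mem_cons_self
    rw [List.foldl_cons, foldl_consStep_apply_of_private (I := I)
      (fun y hy => hpriv y (List.mem_cons_of_mem x hy))
      (consStep_apply_eq_minCounter_of_private h hA hx)]
    by_cases hxe : x = e
    · subst hxe
      rw [consStep_apply_self_of_eq_minCounter h hA, List.count_cons_self]
      omega
    · rw [consStep_apply_of_forall_ne h (hx hxe), List.count_cons_of_ne hxe]

end ConservativeUpdate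

/-- If an element e has a hash position not shared by any other element appearing in the
input, then its conservative Count-Min estimate is exact: c(e) = occ(e). -/
theorem consEstimate_exact_of_private_position {α : Type*} [DecidableEq α] {n k : ℕ}
    (h : Fin (k + 1) → α → Fin n) (I : List α) (e : α) (i : Fin (k + 1))
    (hpriv : ∀ x ∈ I, x ≠ e → ∀ i', h i' x ≠ h i e) :
    consEstimate h I e = I.count e := by
  have hzero : (fun _ => 0 : Fin n → ℕ) (h i e) = minCounter h (fun _ => 0) e :=
    (Nat.eq_zero_of_le_zero (minCounter_le h _ e i)).symm
  calc consEstimate h I e = consRun h I (h i e) :=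
        (foldl_consStep_apply_eq_minCounter_of_private h (A := fun _ => 0) hpriv hzero).symm
    _ = I.count e := by
        rw [consRun, foldl_consStep_apply_of_private h hpriv hzero, Nat.zero_add]
end

section
/- The peeling process is confluent: if a hypergraph can be reduced to the empty hypergraph by some sequence of peeling steps, then every maximal sequence of peeling steps reduces it to the empty hypergraph. In particular, peelability does not depend on the order in which degree-≤1 vertices are removed. -/
/-- A finite hypergraph: a finite vertex set and a multiset of edges (finite vertex sets). -/
structure FinHypergraph (α : Type*) [DecidableEq α] where
  V : Finset α
  E : Multiset (Finset α)

variable {α : Type*} [DecidableEq α]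

/-- Degree of a vertex: the number of edges containing it (with multiplicity). -/
def FinHypergraph.degree (H : FinHypergraph α) (v : α) : ℕ :=
  (H.E.filter (fun s => v ∈ s)).card

/-- A peeling step: remove a vertex of degree at most 1 together with its incident edge
(if any). -/
def PeelStep (H H' : FinHypergraph α) : Prop :=
  ∃ v ∈ H.V, H.degree v ≤ 1 ∧ H'.V = H.V.erase v ∧ H'.E = H.E.filter (fun s => v ∉ s)

/-- A hypergraph is peelable if iterating peeling steps empties it. -/
inductive Peelable : FinHypergraph α → Prop
  | empty (H : FinHypergraph α) (hV : H.V = ∅) : Peelable H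
  | step (H H' : FinHypergraph α) (hs : PeelStep H H') (hp : Peelable H') : Peelable H

/-!
Peeling has the diamond property: if `v ≠ w` can both be peeled from `H`, then each stays
peelable after the other is removed (removing edges only lowers degrees), and removing both in
either order gives the same hypergraph. By induction on a peeling sequence that empties `H`,
peelability is therefore preserved by every peeling step. So the end of any peeling sequence
from a peelable hypergraph is peelable, and if it has no vertex of degree `≤ 1` it must be empty.
-/

namespace FinHypergraph

theorem ext_iff {A B : FinHypergraph α} : A = B ↔ A.V = B.V ∧ A.E = B.E := by
  cases A; cases B; simp

theorem degree_le_of_le {H K : FinHypergraph α} (h : K.E ≤ H.E) (v : α) :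
    K.degree v ≤ H.degree v :=
  Multiset.card_le_card (Multiset.filter_le_filter _ h)

def removeVertex (H : FinHypergraph α) (v : α) : FinHypergraph α :=
  ⟨H.V.erase v, H.E.filter (fun s => v ∉ s)⟩

theorem removeVertex_comm (H : FinHypergraph α) (v w : α) :
    (H.removeVertex v).removeVertex w = (H.removeVertex w).removeVertex v :=
  ext_iff.2 ⟨Finset.erase_right_comm, Multiset.filter_comm _ _ _⟩

theorem degree_removeVertex_le (H : FinHypergraph α) (v w : α) :
    (H.removeVertex v).degree w ≤ H.degree w :=
  degree_le_of_le (Multiset.filter_le _ _) w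

end FinHypergraph

open FinHypergraph

theorem peelStep_iff {H H' : FinHypergraph α} :
    PeelStep H H' ↔ ∃ v ∈ H.V, H.degree v ≤ 1 ∧ H' = H.removeVertex v := by
  simp only [PeelStep, ext_iff, removeVertex]

theorem PeelStep.removeVertex {H : FinHypergraph α} {v : α} (hv : v ∈ H.V)
    (hdeg : H.degree v ≤ 1) : PeelStep H (H.removeVertex v) :=
  peelStep_iff.2 ⟨v, hv, hdeg, rfl⟩

theorem PeelStep.diamond {H H₁ H₂ : FinHypergraph α} (h₁ : PeelStep H H₁)
    (h₂ : PeelStep H H₂) : H₁ = H₂ ∨ ∃ H₃, PeelStep H₁ H₃ ∧ PeelStep H₂ H₃ := by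
  obtain ⟨v, hv, hdv, rfl⟩ := peelStep_iff.1 h₁
  obtain ⟨w, hw, hdw, rfl⟩ := peelStep_iff.1 h₂
  by_cases hvw : v = w
  · exact .inl (hvw ▸ rfl)
  refine .inr ⟨(H.removeVertex v).removeVertex w, ?_, ?_⟩
  · exact .removeVertex (Finset.mem_erase.2 ⟨Ne.symm hvw, hw⟩)
      ((degree_removeVertex_le H v w).trans hdw)
  · rw [removeVertex_comm]
    exact .removeVertex (Finset.mem_erase.2 ⟨hvw, hv⟩)
      ((degree_removeVertex_le H w v).trans hdv)

theorem Peelable.of_peelStep {H H' : FinHypergraph α} (hp : Peelable H)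
    (hs : PeelStep H H') : Peelable H' := by
  induction hp generalizing H' with
  | empty _ hV =>
    obtain ⟨v, hv, _⟩ := hs
    simp [hV] at hv
  | step H H₁ hs₁ hp₁ ih =>
    rcases hs₁.diamond hs with rfl | ⟨H₃, h₁₃, h₃⟩
    · exact hp₁
    · exact .step H' H₃ h₃ (ih h₁₃)

theorem Peelable.of_reflTransGen {H H' : FinHypergraph α} (hp : Peelable H)
    (hsteps : Relation.ReflTransGen PeelStep H H') : Peelable H' := by
  induction hsteps with
  | refl => exact hp
  | tail _ hs ih => exact ih.of_peelStep hs

theorem Peelable.eq_empty_or_exists_degree_le_one {H : FinHypergraph α} (hp : Peelable H) :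
    H.V = ∅ ∨ ∃ v ∈ H.V, H.degree v ≤ 1 := by
  cases hp with
  | empty _ hV => exact .inl hV
  | step _ _ hs _ =>
    obtain ⟨v, hv, hdeg, _⟩ := hs
    exact .inr ⟨v, hv, hdeg⟩

/-- Confluence of peeling: if a hypergraph is peelable, then every maximal sequence of
peeling steps (ending at a hypergraph with no vertex of degree ≤ 1) reaches the empty
hypergraph; peelability does not depend on the order of removals. -/
theorem peeling_confluent {α : Type*} [DecidableEq α] (H H' : FinHypergraph α)
    (hp : Peelable H) (hsteps : Relation.ReflTransGen PeelStep H H')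
    (hmax : ¬ ∃ v ∈ H'.V, H'.degree v ≤ 1) :
    H'.V = ∅ :=
  (hp.of_reflTransGen hsteps).eq_empty_or_exists_degree_le_one.resolve_right hmax
end

section
/- If element e is peelable in the hash hypergraph restricted to the elements of the input (i.e., the edge of e is removed at some point during a successful peeling of the subhypergraph containing it), and e has a hash position of degree 1 at the moment of its peeling, then in conservative Count-Min with any input supported on these elements, c(e) ≤ occ(e) + total occurrences of all elements whose edges were peeled before e's edge could be peeled. -/
variable {α : Type*} [DecidableEq α]

lemma consStep_le {n k : ℕ} (h : Fin (k + 1) → α → Fin n) (A : Fin n → ℕ) (x : α)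
    (j : Fin n) :
    consStep h A x j ≤ A j + (if ∃ i', h i' x = j then 1 else 0) := by
  unfold consStep
  split <;> rename_i hc
  · rw [if_pos hc.1]
  · omega

lemma foldl_consStep_le {n k : ℕ} (h : Fin (k + 1) → α → Fin n) (j : Fin n) :
    ∀ (I : List α) (A : Fin n → ℕ),
      (I.foldl (consStep h) A) j ≤ A j + I.countP (fun x => decide (∃ i', h i' x = j))
  | [], A => by simp
  | a :: l, A => by
    simp only [List.foldl_cons, List.countP_cons]
    calc (l.foldl (consStep h) (consStep h A a)) j
        ≤ consStep h A a j + l.countP (fun x => decide (∃ i', h i' x = j)) :=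
          foldl_consStep_le h j l _
      _ ≤ A j + (if ∃ i', h i' a = j then 1 else 0)
            + l.countP (fun x => decide (∃ i', h i' x = j)) := by
          exact Nat.add_le_add_right (consStep_le h A a j) _
      _ ≤ _ := by
          simp only [decide_eq_true_eq]
          split <;> omega

lemma countP_mem_le {S : Finset α} :
    ∀ (I : List α), I.countP (fun x => decide (x ∈ S)) = ∑ x ∈ S, I.count x
  | [] => by simp
  | a :: l => by
    rw [List.countP_cons, countP_mem_le l]
    simp only [List.count_cons, Finset.sum_add_distrib, decide_eq_true_eq]
    simp only [beq_iff_eq]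
    rw [Finset.sum_ite_eq S a (fun _ => 1)]

/-- If element e has a hash position h i e which, in the hash hypergraph restricted to the
input elements, is touched only by e and by the set P of elements peeled before e (degree 1
at the moment e's edge is peeled), then the conservative estimate of e is at most
occ(e) plus the total occurrences of the earlier-peeled elements. -/
theorem consEstimate_le_of_peelable {α : Type*} [DecidableEq α] {n k : ℕ}
    (h : Fin (k + 1) → α → Fin n) (I : List α) (e : α) (P : Finset α) (heP : e ∉ P)
    (i : Fin (k + 1))
    (hdeg : ∀ x ∈ I, x ≠ e → x ∉ P → ∀ i', h i' x ≠ h i e) :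
    consEstimate h I e ≤ I.count e + ∑ x ∈ P, I.count x := by
  have hle : consEstimate h I e ≤ consRun h I (h i e) := by
    unfold consEstimate minCounter
    exact Finset.inf'_le _ (Finset.mem_univ i)
  refine hle.trans ?_
  have h1 := foldl_consStep_le h (h i e) I (fun _ => 0)
  simp only [Nat.zero_add] at h1
  refine h1.trans ?_
  have h2 : I.countP (fun x => decide (∃ i', h i' x = h i e))
      ≤ I.countP (fun x => decide (x ∈ insert e P)) := by
    apply List.countP_mono_left
    intro x hx hpx
    simp only [decide_eq_true_eq] at hpx ⊢
    by_contra hc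
    simp only [Finset.mem_insert, not_or] at hc
    obtain ⟨i', hi'⟩ := hpx
    exact hdeg x hx hc.1 hc.2 i' hi'
  refine h2.trans ?_
  rw [countP_mem_le, Finset.sum_insert heP]
end
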